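/- Let n be a positive integer divisible by 2 with n ≥ 8. For every set Ω ⊆ {1,…,n}×{1,…,n} with |Ω| ≤ n²/4, there exist two distinct rank-2 matrices M₁ ≠ M₂ ∈ ℝ^{n×n}, each of whose thin SVD factors U, V ∈ ℝ^{n×2} (with orthonormal columns) satisfy the incoherence bounds ‖U^i‖² ≤ 3/n and ‖V^j‖² ≤ 3/n for all rows i, j, such that P_Ω(M₁) = P_Ω(M₂). In particular, no recovery procedure can exactly recover every rank-2 matrix satisfying the standard incoherence assumption A1 (with μ₀ ≤ 3/2) from the observations P_Ω(M). -/

import Mathlib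

open Matrix
open scoped BigOperators

noncomputable section

/-- Euclidean norm of a vector. -/
def vecNorm {β : Type*} [Fintype β] (x : β → ℝ) : ℝ :=
  Real.sqrt (∑ i, x i ^ 2)

/-- Spectral norm (largest singular value) of a real matrix. -/
def specNorm {α β : Type*} [Fintype α] [Fintype β] (A : Matrix α β ℝ) : ℝ :=
  sSup {c | ∃ x : β → ℝ, vecNorm x ≤ 1 ∧ c = vecNorm (A.mulVec x)}

/-- Second largest singular value of a real matrix (Courant–Fischer characterization). -/
def sigma2 {α β : Type*} [Fintype α] [Fintype β] (A : Matrix α β ℝ) : ℝ :=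
  ⨅ v : β → ℝ, sSup {c | ∃ x : β → ℝ,
    vecNorm x ≤ 1 ∧ (∑ i, v i * x i) = 0 ∧ c = vecNorm (A.mulVec x)}

/-- Frobenius norm. -/
def frobNorm {α β : Type*} [Fintype α] [Fintype β] (A : Matrix α β ℝ) : ℝ :=
  Real.sqrt (∑ i, ∑ j, A i j ^ 2)

/-- Nuclear norm: the sum of the singular values, i.e. the trace of `√(AᵀA)`. -/
def nuclearNorm {α β : Type*} [Fintype α] [Fintype β] [DecidableEq β]
    (A : Matrix α β ℝ) : ℝ :=
  (let hA := Matrix.posSemidef_conjTranspose_mul_self A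
   (hA.1.eigenvectorUnitary : Matrix β β ℝ) *
     Matrix.diagonal (RCLike.ofReal ∘ Real.sqrt ∘ hA.1.eigenvalues) *
     (star hA.1.eigenvectorUnitary : Matrix β β ℝ)).trace

/-- The sampling operator `P_Ω`. -/
def sampl {n : ℕ} (Ω : Finset (Fin n × Fin n)) (M : Matrix (Fin n) (Fin n) ℝ) :
    Matrix (Fin n) (Fin n) ℝ :=
  Matrix.of fun i j => if (i, j) ∈ Ω then M i j else 0

/-- The biadjacency matrix `G` of the bipartite graph with edge set `Ω`. -/
def biadj {n : ℕ} (Ω : Finset (Fin n × Fin n)) : Matrix (Fin n) (Fin n) ℝ :=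
  Matrix.of fun i j => if (i, j) ∈ Ω then (1 : ℝ) else 0

/-- `Ω` is the edge set of a `d`-regular bipartite graph: every row and every column
of `G` has exactly `d` ones. -/
def RegularSampling {n : ℕ} (Ω : Finset (Fin n × Fin n)) (d : ℕ) : Prop :=
  (∀ i : Fin n, (Finset.univ.filter fun j => (i, j) ∈ Ω).card = d) ∧
  (∀ j : Fin n, (Finset.univ.filter fun i => (i, j) ∈ Ω).card = d)

/-- Assumption G1: the all-ones vector is a top left- and right-singular vector of `G`,
with `σ₁(G) = d`. -/
def AssumptionG1 {n : ℕ} (Ω : Finset (Fin n × Fin n)) (d : ℕ) : Prop :=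
  specNorm (biadj Ω) = d ∧
  (biadj Ω).mulVec (fun _ => 1) = (fun _ => (d : ℝ)) ∧
  Matrix.vecMul (fun _ => 1) (biadj Ω) = (fun _ => (d : ℝ))

/-- Assumption G2: `σ₂(G) ≤ C·√d`. -/
def AssumptionG2 {n : ℕ} (Ω : Finset (Fin n × Fin n)) (d : ℕ) (C : ℝ) : Prop :=
  sigma2 (biadj Ω) ≤ C * Real.sqrt d

/-- Assumption A1 (`μ₀`-incoherence) for one factor: every row `U^i` satisfies
`‖U^i‖² ≤ μ₀ r / n`. -/
def IncoherentRows {n r : ℕ} (U : Matrix (Fin n) (Fin r) ℝ) (μ₀ : ℝ) : Prop :=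
  ∀ i : Fin n, (∑ k, U i k ^ 2) ≤ μ₀ * r / n

/-- Assumption A2 (strong incoherence with parameter `δ`) for one factor:
for every `S` with `|S| = d`, `‖(n/d)·∑_{k∈S} U^k (U^k)ᵀ − I‖ ≤ δ`. -/
def StrongIncoherence {n r : ℕ} (U : Matrix (Fin n) (Fin r) ℝ) (d : ℕ) (δ : ℝ) : Prop :=
  ∀ S : Finset (Fin n), S.card = d →
    specNorm (((n : ℝ) / (d : ℝ)) • (∑ k ∈ S, Matrix.vecMulVec (U k) (U k)) - 1) ≤ δ

/-- `M = U · diagonal s · Vᵀ` is a thin SVD of the rank-`r` matrix `M`. -/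
def IsThinSVD {n r : ℕ} (M : Matrix (Fin n) (Fin n) ℝ)
    (U : Matrix (Fin n) (Fin r) ℝ) (s : Fin r → ℝ) (V : Matrix (Fin n) (Fin r) ℝ) : Prop :=
  Uᵀ * U = 1 ∧ Vᵀ * V = 1 ∧ (∀ i, 0 < s i) ∧ M = U * Matrix.diagonal s * Vᵀ

/-- The projection `P_T` onto the subspace `T` spanned by matrices `UXᵀ` and `YVᵀ`. -/
def projT {n r : ℕ} (U V : Matrix (Fin n) (Fin r) ℝ) (Z : Matrix (Fin n) (Fin n) ℝ) :
    Matrix (Fin n) (Fin n) ℝ :=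
  U * Uᵀ * Z + Z * (V * Vᵀ) - U * Uᵀ * Z * (V * Vᵀ)

/-- The projection `P_{T⊥}` onto the orthogonal complement of `T`. -/
def projTperp {n r : ℕ} (U V : Matrix (Fin n) (Fin r) ℝ) (Z : Matrix (Fin n) (Fin n) ℝ) :
    Matrix (Fin n) (Fin n) ℝ :=
  (1 - U * Uᵀ) * Z * (1 - V * Vᵀ)

end

/-- `M` is a rank-2 matrix with a thin SVD whose factors satisfy the incoherence
bounds `‖U^i‖² ≤ 3/n` and `‖V^j‖² ≤ 3/n`. -/
def IncoherentRank2 {n : ℕ} (M : Matrix (Fin n) (Fin n) ℝ) : Prop :=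
  M.rank = 2 ∧
  ∃ (U V : Matrix (Fin n) (Fin 2) ℝ) (s : Fin 2 → ℝ),
    Uᵀ * U = 1 ∧ Vᵀ * V = 1 ∧ (∀ i, 0 < s i) ∧
    M = U * Matrix.diagonal s * Vᵀ ∧
    (∀ i : Fin n, (∑ k, U i k ^ 2) ≤ 3 / n) ∧
    (∀ j : Fin n, (∑ k, V j k ^ 2) ≤ 3 / n)

/-! Write `n = 2m`. As `|Ω| ≤ m²`, some column `j₀` has at most `m` observed entries, so a set
`T` of `m` rows is unobserved in column `j₀`. Take `U` with columns `1_{Tᶜ}/√m, 1_T/√m` and `V`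
with columns `1_{Cᶜ}/√m, 1_C/√m` for a set `C ∋ j₀` of `m` columns: both have orthonormal
columns and rows of squared norm `1/m = 2/n`. Flipping the sign of row `j₀` of `V` keeps this,
and changes `UVᵀ` only in column `j₀` on the rows of `T`, none of which is observed. -/

open Finset

section RowSingle

variable {ι κ : Type*} [DecidableEq κ]

def rowSingle (f : ι → κ) (s : ι → ℝ) : Matrix ι κ ℝ :=
  Matrix.of fun i => Pi.single (f i) (s i)

lemma rowSingle_apply (f : ι → κ) (s : ι → ℝ) (i : ι) (k : κ) :
    rowSingle f s i k = if k = f i then s i else 0 :=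
  Pi.single_apply _ _ _

lemma sum_rowSingle_sq [Fintype κ] (f : ι → κ) (s : ι → ℝ) (i : ι) :
    ∑ k, rowSingle f s i k ^ 2 = s i ^ 2 := by
  simp [rowSingle_apply, ite_pow]

lemma mul_transpose_rowSingle_apply [Fintype κ] {m : Type*} (U : Matrix m κ ℝ) (f : ι → κ)
    (s : ι → ℝ) (i : m) (j : ι) :
    (U * (rowSingle f s)ᵀ) i j = U i (f j) * s j :=
  dotProduct_single _ _ _

lemma transpose_mul_rowSingle_apply [Fintype ι] [DecidableEq ι] (f : ι → κ) (s : ι → ℝ)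
    (k l : κ) :
    ((rowSingle f s)ᵀ * rowSingle f s) k l = if k = l then ∑ i with f i = k, s i ^ 2 else 0 := by
  simp only [Matrix.mul_apply, Matrix.transpose_apply, rowSingle_apply]
  split_ifs with hkl
  · subst hkl
    rw [sum_filter]
    refine sum_congr rfl fun i _ => ?_
    by_cases h : f i = k
    · simp [h, sq]
    · simp [h, Ne.symm h]
  · exact sum_eq_zero fun i _ => by split_ifs with h h' <;> simp_all

lemma rowSingle_transpose_mul_self [Fintype ι] {c : ℝ} (f : ι → κ) (s : ι → ℝ)
    (hs : ∀ i, s i ^ 2 = c) (hf : ∀ k, #{i | f i = k} * c = 1) :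
    (rowSingle f s)ᵀ * rowSingle f s = 1 := by
  classical
  ext k l
  rw [transpose_mul_rowSingle_apply, Matrix.one_apply]
  split_ifs with hkl
  · simp [hs, hf]
  · rfl

end RowSingle

lemma rank_mul_transpose_of_orthonormal {m κ : Type*} [Fintype m] [Fintype κ] [DecidableEq κ]
    {U V : Matrix m κ ℝ} (hU : Uᵀ * U = 1) (hV : Vᵀ * V = 1) :
    (U * Vᵀ).rank = Fintype.card κ := by
  refine le_antisymm ((rank_mul_le_left _ _).trans (rank_le_card_width U)) ?_
  calc Fintype.card κ = (Uᵀ * (U * Vᵀ) * V).rank := by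
        rw [Matrix.mul_assoc, Matrix.mul_assoc, hV, Matrix.mul_one, hU, rank_one]
    _ ≤ (U * Vᵀ).rank := (rank_mul_le_left _ _).trans (rank_mul_le_right _ _)

lemma exists_column_unobserved {α β : Type*} [Fintype α] [Fintype β] [Nonempty β]
    [DecidableEq α] [DecidableEq β] (Ω : Finset (α × β)) {k : ℕ} (h : #Ω ≤ Fintype.card β * k) :
    ∃ j, ∃ T : Finset α, #T = Fintype.card α - k ∧ ∀ i ∈ T, (i, j) ∉ Ω := by
  obtain ⟨j, -, hj⟩ := exists_card_fiber_le_of_card_le_mul (f := Prod.snd) univ_nonempty h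
  have hobs : #{i | (i, j) ∈ Ω} ≤ k :=
    calc #{i | (i, j) ∈ Ω} ≤ #(({p ∈ Ω | p.2 = j}).image Prod.fst) :=
          card_le_card fun i hi => mem_image.2 ⟨(i, j), by simpa using hi, rfl⟩
      _ ≤ k := card_image_le.trans hj
  obtain ⟨T, hT, hTcard⟩ := exists_subset_card_eq (s := ({i | (i, j) ∈ Ω} : Finset α)ᶜ)
    (n := Fintype.card α - k) (by rw [card_compl]; omega)
  exact ⟨j, T, hTcard, fun i hi => by simpa using hT hi⟩

section SplitFrame

variable {ι : Type*} [DecidableEq ι]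

def splitFrame (T : Finset ι) (s : ι → ℝ) : Matrix ι (Fin 2) ℝ :=
  rowSingle (fun i => if i ∈ T then 1 else 0) s

lemma splitFrame_apply_one {T : Finset ι} {s : ι → ℝ} {i : ι} :
    splitFrame T s i 1 = if i ∈ T then s i else 0 := by
  by_cases h : i ∈ T <;> simp [splitFrame, rowSingle_apply, h]

lemma splitFrame_transpose_mul_self [Fintype ι] {c : ℝ} {T : Finset ι} {s : ι → ℝ}
    (hs : ∀ i, s i ^ 2 = c) (hT : #T * c = 1) (hTc : #Tᶜ * c = 1) :
    (splitFrame T s)ᵀ * splitFrame T s = 1 := by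
  classical
  refine rowSingle_transpose_mul_self _ _ hs (Fin.forall_fin_two.2 ⟨?_, ?_⟩)
  · simpa [filter_not, ← compl_eq_univ_sdiff] using hTc
  · simpa using hT

end SplitFrame

lemma incoherentRank2_mul_transpose {n : ℕ} {U V : Matrix (Fin n) (Fin 2) ℝ}
    (hU : Uᵀ * U = 1) (hV : Vᵀ * V = 1)
    (hUrow : ∀ i, ∑ k, U i k ^ 2 ≤ 3 / n) (hVrow : ∀ j, ∑ k, V j k ^ 2 ≤ 3 / n) :
    IncoherentRank2 (U * Vᵀ) :=
  ⟨by simpa using rank_mul_transpose_of_orthonormal hU hV, U, V, fun _ => 1, hU, hV,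
    fun _ => one_pos, by rw [diagonal_one, Matrix.mul_one], hUrow, hVrow⟩

lemma incoherentRank2_splitFrame_mul_transpose {m : ℕ} (hm : m ≠ 0) {T C : Finset (Fin (2 * m))}
    (hT : #T = m) (hC : #C = m) {s t : Fin (2 * m) → ℝ}
    (hs : ∀ i, s i ^ 2 = 1 / m) (ht : ∀ j, t j ^ 2 = 1 / m) :
    IncoherentRank2 (splitFrame T s * (splitFrame C t)ᵀ) := by
  have hcard {A : Finset (Fin (2 * m))} (hA : #A = m) :
      #A * (1 / m : ℝ) = 1 ∧ #Aᶜ * (1 / m : ℝ) = 1 := by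
    rw [card_compl, Fintype.card_fin, hA, show 2 * m - m = m by omega]
    simp [hm]
  have hrow {r : Fin (2 * m) → ℝ} (hr : ∀ i, r i ^ 2 = 1 / m) (A : Finset (Fin (2 * m)))
      (i : Fin (2 * m)) : ∑ k, splitFrame A r i k ^ 2 ≤ 3 / ((2 * m : ℕ) : ℝ) := by
    rw [splitFrame, sum_rowSingle_sq, hr, div_le_div_iff₀ (by positivity) (by positivity)]
    push_cast
    linarith
  exact incoherentRank2_mul_transpose
    (splitFrame_transpose_mul_self hs (hcard hT).1 (hcard hT).2)
    (splitFrame_transpose_mul_self ht (hcard hC).1 (hcard hC).2) (hrow hs T) (hrow ht C)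

lemma mul_transpose_rowSingle_update_ne {m ι κ : Type*} [Fintype κ] [DecidableEq κ]
    [DecidableEq ι] (U : Matrix m κ ℝ) (f : ι → κ) (s : ι → ℝ) (j₀ : ι) (x : ℝ) {i : m}
    (hU : U i (f j₀) ≠ 0) (hx : x ≠ s j₀) :
    U * (rowSingle f s)ᵀ ≠ U * (rowSingle f (Function.update s j₀ x))ᵀ := by
  intro h
  have := congrFun (congrFun h i) j₀
  simp only [mul_transpose_rowSingle_apply, Function.update_self] at this
  exact hx (mul_left_cancel₀ hU this).symm

lemma sampl_mul_transpose_rowSingle_update {n : ℕ} {κ : Type*} [Fintype κ] [DecidableEq κ]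
    (U : Matrix (Fin n) κ ℝ) (f : Fin n → κ) (s : Fin n → ℝ) (j₀ : Fin n) (x : ℝ)
    {Ω : Finset (Fin n × Fin n)} (hU : ∀ i, (i, j₀) ∈ Ω → U i (f j₀) = 0) :
    sampl Ω (U * (rowSingle f s)ᵀ) = sampl Ω (U * (rowSingle f (Function.update s j₀ x))ᵀ) := by
  ext i j
  simp only [sampl, of_apply, mul_transpose_rowSingle_apply]
  split_ifs with hij
  · rcases eq_or_ne j j₀ with rfl | hj
    · simp [hU i hij]
    · rw [Function.update_of_ne hj]
  · rfl

/-- with at most `n²/4` samples, two distinct incoherent rank-2 matrices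
agree on all observed entries, so universal exact recovery is impossible (Claim 2). -/
theorem stmt_6 {n : ℕ} (hn2 : 2 ∣ n) (hn : 8 ≤ n)
    (Ω : Finset (Fin n × Fin n)) (hΩ : (Ω.card : ℝ) ≤ (n : ℝ) ^ 2 / 4) :
    ∃ M₁ M₂ : Matrix (Fin n) (Fin n) ℝ,
      M₁ ≠ M₂ ∧ IncoherentRank2 M₁ ∧ IncoherentRank2 M₂ ∧
      sampl Ω M₁ = sampl Ω M₂ := by
  obtain ⟨m, rfl⟩ := hn2
  have hm : m ≠ 0 := by omega
  have : NeZero (2 * m) := ⟨by omega⟩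
  have hΩm : #Ω ≤ Fintype.card (Fin (2 * m)) * m := by
    have : (#Ω : ℝ) ≤ 2 * m * m := by push_cast at hΩ; nlinarith
    simpa [mul_assoc] using (by exact_mod_cast this : #Ω ≤ 2 * m * m)
  obtain ⟨j₀, T, hT, hTΩ⟩ := exists_column_unobserved Ω hΩm
  rw [Fintype.card_fin, show 2 * m - m = m by omega] at hT
  obtain ⟨C, hj₀C, hC⟩ := exists_superset_card_eq (s := {j₀}) (n := m)
    (by simp; omega) (by simp; omega)
  set α := √(1 / m : ℝ)
  have hα : α ^ 2 = 1 / m := Real.sq_sqrt (by positivity)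
  have hα' : α ≠ 0 := by positivity
  set U := splitFrame T fun _ => α
  set s₂ := Function.update (fun _ => α) j₀ (-α)
  have hs₂ (j) : s₂ j ^ 2 = 1 / m := by
    rcases eq_or_ne j j₀ with rfl | hj
    · simp [s₂, hα]
    · simp [s₂, hj, hα]
  obtain ⟨i₀, hi₀⟩ : T.Nonempty := card_pos.1 (by omega)
  refine ⟨U * (splitFrame C fun _ => α)ᵀ, U * (splitFrame C s₂)ᵀ,
    mul_transpose_rowSingle_update_ne U _ _ j₀ _ (i := i₀) ?_ ?_,
    incoherentRank2_splitFrame_mul_transpose hm hT hC (fun _ => hα) (fun _ => hα),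
    incoherentRank2_splitFrame_mul_transpose hm hT hC (fun _ => hα) hs₂,
    sampl_mul_transpose_rowSingle_update U _ _ j₀ _ fun i hi => ?_⟩
  · simp [U, splitFrame_apply_one, hi₀, singleton_subset_iff.1 hj₀C, hα']
  · exact fun h => hα' (by linarith)
  · have hiT : i ∉ T := fun hiT => hTΩ i hiT hi
    simp [U, splitFrame_apply_one, hiT, singleton_subset_iff.1 hj₀C]
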